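/- arXiv:1404.7221 — 3 statements merged into one kernel-verified Lean document; each statement's English description precedes it below -/
import Mathlib

section
/- The sequence (-1)^{n+1} B_{2n} · (2π)^{2n} / (2·(2n)!) converges to 1 as n → ∞, where B_{2n} is the 2n-th Bernoulli number. -/
/-! The term is exactly `ζ(2n)` by Euler's formula for the zeta values at even integers, and
`ζ(x) → 1` as `x → ∞` because every term `k⁻ˣ` of the Dirichlet series with `k ≥ 2` tends to `0`. -/

open Filter Topology Complex

theorem tendsto_riemannZeta_atTop :
    Tendsto (fun x : ℝ ↦ riemannZeta x) atTop (𝓝 1) := by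
  have hL := LSeries.tendsto_atTop (f := 1) (LSeries.abscissaOfAbsConv_one ▸ EReal.coe_lt_top 1)
  refine hL.congr' ?_
  filter_upwards [eventually_gt_atTop 1] with x hx
  exact LSeries_one_eq_riemannZeta (by simpa using hx)

theorem riemannZeta_two_mul_nat_eq_ofReal {n : ℕ} (hn : n ≠ 0) :
    riemannZeta (2 * n) = ↑((-1) ^ (n + 1) * (bernoulli (2 * n) : ℝ) * (2 * Real.pi) ^ (2 * n)
      / (2 * Nat.factorial (2 * n))) := by
  have h2 : (2 : ℂ) ^ (2 * n) = 2 ^ (2 * n - 1) * 2 := by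
    rw [← pow_succ, Nat.sub_add_cancel (by lia)]
  rw [riemannZeta_two_mul_nat hn]
  push_cast
  rw [mul_pow, h2]
  field_simp

theorem stmt9 :
    Filter.Tendsto
      (fun n : ℕ => (-1)^(n+1) * (bernoulli (2*n) : ℝ) * (2*Real.pi)^(2*n)
        / (2 * Nat.factorial (2*n)))
      Filter.atTop (nhds 1) := by
  have hζ : Tendsto (fun n : ℕ ↦ riemannZeta (2 * n)) atTop (𝓝 1) := by
    have h2n : Tendsto (fun n : ℕ ↦ (2 * n : ℝ)) atTop atTop :=
      tendsto_natCast_atTop_atTop.const_mul_atTop two_pos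
    simpa [Function.comp_def] using tendsto_riemannZeta_atTop.comp h2n
  rw [← tendsto_ofReal_iff, ofReal_one]
  refine hζ.congr' ?_
  filter_upwards [eventually_ne_atTop 0] with n hn
  exact riemannZeta_two_mul_nat_eq_ofReal hn
end

section
/- The sequence (-1)^{n+1} (∫₀¹ B_{2n+1}(x) cot(πx) dx) · (2π)^{2n+1} / (2·(2n+1)!) converges to 1 as n → ∞, where B_{2n+1}(x) is the Bernoulli polynomial of degree 2n+1. -/
/-- Evaluation of the k-th Bernoulli polynomial at a real number. -/
noncomputable def bernoulliPolyEval (k : ℕ) (t : ℝ) : ℝ :=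
  Polynomial.aeval t (Polynomial.bernoulli k)

/-!
On `[0, 1]` the Bernoulli polynomial `B_{2n+1}` is a sine series
`B_{2n+1}(x) = c_n ∑_{m ≥ 1} sin (2πmx) / m^{2n+1}`,
`c_n = (-1)^{n+1} 2 (2n+1)! / (2π)^{2n+1}`.
For `θ = πx` the product `sin (2mθ) cot θ` is the trigonometric polynomial
`∑_{j < m} (cos 2jθ + cos 2(j+1)θ)`: it is bounded by `2m`, and for `m ≥ 1` its integral over
`[0, 1]` is `1`.
So the series may be integrated termwise against `cot (πx)`, and the normalised integral is
`ζ(2n+1) = ∑_{m ≥ 1} 1 / m^{2n+1}`, which tends to `1` by dominated convergence.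
-/

open Real Filter Topology MeasureTheory

namespace Real

theorem sin_two_mul_nat_mul_mul_cot {θ : ℝ} (hθ : sin θ ≠ 0) (m : ℕ) :
    sin (2 * m * θ) * cot θ
      = ∑ j ∈ Finset.range m, (cos (2 * j * θ) + cos (2 * (j + 1) * θ)) := by
  induction m with
  | zero => simp
  | succ m ih =>
    have sin_sub :
        sin (2 * (m + 1) * θ) - sin (2 * m * θ) = 2 * sin θ * cos ((2 * m + 1) * θ) := by
      rw [sin_sub_sin]; ring_nf
    have cos_add :
        cos (2 * (m + 1) * θ) + cos (2 * m * θ) = 2 * cos ((2 * m + 1) * θ) * cos θ := by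
      rw [cos_add_cos]; ring_nf
    rw [Finset.sum_range_succ, ← ih, cot_eq_cos_div_sin]
    push_cast
    field_simp
    linear_combination cos θ * sin_sub - sin θ * cos_add

theorem abs_sin_two_mul_nat_mul_mul_cot_le (m : ℕ) (θ : ℝ) :
    |sin (2 * m * θ) * cot θ| ≤ 2 * m := by
  by_cases hθ : sin θ = 0
  · -- `cot θ = cos θ / 0 = 0`
    simp [cot_eq_cos_div_sin, hθ]
  rw [sin_two_mul_nat_mul_mul_cot hθ]
  calc _ ≤ ∑ j ∈ Finset.range m, |cos (2 * j * θ) + cos (2 * (j + 1) * θ)| :=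
        Finset.abs_sum_le_sum_abs _ _
    _ ≤ ∑ _j ∈ Finset.range m, (2 : ℝ) := Finset.sum_le_sum fun j _ =>
        (abs_add_le _ _).trans
          (by linarith [abs_cos_le_one (2 * j * θ), abs_cos_le_one (2 * (j + 1) * θ)])
    _ = 2 * m := by simp [mul_comm]

theorem integral_cos_two_mul_nat_mul_pi_mul (j : ℕ) :
    ∫ x in (0 : ℝ)..1, cos (2 * j * (π * x)) = if j = 0 then 1 else 0 := by
  rcases eq_or_ne j 0 with rfl | hj
  · simp
  have hc : 2 * j * π ≠ 0 := by positivity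
  simp_rw [← mul_assoc]
  rw [intervalIntegral.integral_comp_mul_left cos hc, integral_cos, if_neg hj, mul_zero, mul_one,
    sin_zero, sub_zero, show 2 * (j : ℝ) * π = (2 * j : ℕ) * π by push_cast; ring,
    sin_nat_mul_pi, smul_zero]

theorem integral_sin_two_mul_nat_mul_pi_mul_mul_cot (m : ℕ) :
    ∫ x in (0 : ℝ)..1, sin (2 * m * (π * x)) * cot (π * x) = if m = 0 then 0 else 1 := by
  have sin_ne_zero : ∀ᵐ x, x ∈ Set.uIoc (0 : ℝ) 1 → sin (π * x) ≠ 0 := by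
    filter_upwards [volume.ae_ne 1] with x hx1 hx
    rw [Set.uIoc_of_le zero_le_one] at hx
    exact (sin_pos_of_pos_of_lt_pi (by nlinarith [pi_pos, hx.1])
      (by nlinarith [pi_pos, lt_of_le_of_ne hx.2 hx1])).ne'
  have cos_integrable (c : ℝ) : IntervalIntegrable (fun x => cos (c * (π * x))) volume 0 1 :=
    (continuous_cos.comp (by fun_prop)).intervalIntegrable 0 1
  have integral_cos_succ (j : ℕ) : ∫ x in (0 : ℝ)..1, cos (2 * (j + 1) * (π * x)) = 0 := by
    simpa using integral_cos_two_mul_nat_mul_pi_mul (j + 1)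
  rw [intervalIntegral.integral_congr_ae (sin_ne_zero.mono fun x hx hxI =>
      sin_two_mul_nat_mul_mul_cot (hx hxI) m),
    intervalIntegral.integral_finsetSum fun j _ => (cos_integrable _).add (cos_integrable _)]
  simp_rw [intervalIntegral.integral_add (cos_integrable _) (cos_integrable _), integral_cos_succ,
    integral_cos_two_mul_nat_mul_pi_mul]
  simp [Finset.sum_ite_eq', Nat.pos_iff_ne_zero]

end Real

open Nat in
theorem hasSum_integral_bernoulliPolyEval_mul_cot {k : ℕ} (hk : k ≠ 0) :
    HasSum (fun m : ℕ => 1 / (m : ℝ) ^ (2 * k + 1))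
      ((-1 : ℝ) ^ (k + 1) * (2 * π) ^ (2 * k + 1) / 2 / (2 * k + 1)! *
        ∫ x in (0 : ℝ)..1, bernoulliPolyEval (2 * k + 1) x * cot (π * x)) := by
  set F : ℕ → ℝ → ℝ := fun m x =>
    1 / (m : ℝ) ^ (2 * k + 1) * sin (2 * π * m * x) * cot (π * x)
  have rearrange (m : ℕ) (x : ℝ) :
      F m x = 1 / (m : ℝ) ^ (2 * k + 1) * (sin (2 * m * (π * x)) * cot (π * x)) := by
    simp only [F]; ring_nf
  have integral_F (m : ℕ) : ∫ x in (0 : ℝ)..1, F m x = 1 / (m : ℝ) ^ (2 * k + 1) := by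
    simp_rw [rearrange, intervalIntegral.integral_const_mul,
      integral_sin_two_mul_nat_mul_pi_mul_mul_cot]
    split_ifs with hm <;> simp [hm, hk]
  have norm_F_le (m : ℕ) (x : ℝ) : ‖F m x‖ ≤ 2 / (m : ℝ) ^ (2 * k) := by
    rcases eq_or_ne m 0 with rfl | hm
    · simp [F, hk]
    calc ‖F m x‖ ≤ 1 / (m : ℝ) ^ (2 * k + 1) * (2 * m) := by
          rw [rearrange, norm_mul, Real.norm_eq_abs, abs_of_nonneg (by positivity)]
          gcongr
          exact abs_sin_two_mul_nat_mul_mul_cot_le m (π * x)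
      _ = 2 / (m : ℝ) ^ (2 * k) := by field_simp; ring
  have F_measurable (m : ℕ) : Measurable (F m) := by
    simp only [F, cot_eq_cos_div_sin]
    fun_prop
  set c : ℝ := (-1 : ℝ) ^ (k + 1) * (2 * π) ^ (2 * k + 1) / 2 / (2 * k + 1)!
  have sine_series (x : ℝ) (hx : x ∈ Set.Icc (0 : ℝ) 1) :
      HasSum (fun m => F m x) (c * (bernoulliPolyEval (2 * k + 1) x * cot (π * x))) := by
    have := (hasSum_one_div_nat_pow_mul_sin hk hx).mul_right (cot (π * x))
    rwa [Polynomial.eval_map_algebraMap, mul_assoc] at this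
  have termwise := intervalIntegral.hasSum_integral_of_dominated_convergence
    (μ := volume) (a := 0) (b := 1) (F := F)
    (f := fun x => c * (bernoulliPolyEval (2 * k + 1) x * cot (π * x)))
    (fun (m : ℕ) _ => 2 / (m : ℝ) ^ (2 * k)) (fun m => (F_measurable m).aestronglyMeasurable)
    (fun m => ae_of_all _ fun x _ => norm_F_le m x)
    (ae_of_all _ fun _ _ => by
      simpa [div_eq_mul_inv] using (Real.summable_nat_pow_inv.mpr (by omega)).mul_left 2)
    intervalIntegrable_const
    (ae_of_all _ fun x hx =>
      sine_series x (Set.Ioc_subset_Icc_self (by simpa [Set.uIoc_of_le] using hx)))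
  simpa only [integral_F, intervalIntegral.integral_const_mul] using termwise

theorem tendsto_tsum_one_div_nat_pow_atTop :
    Tendsto (fun k : ℕ => ∑' m : ℕ, 1 / (m : ℝ) ^ k) atTop (𝓝 1) := by
  have term_limit (m : ℕ) :
      Tendsto (fun k : ℕ => 1 / (m : ℝ) ^ k) atTop (𝓝 (if m = 1 then 1 else 0)) := by
    simp_rw [one_div, ← inv_pow]
    split_ifs with hm
    · simp [hm]
    · refine tendsto_pow_atTop_nhds_zero_of_lt_one (by positivity) ?_
      rcases Nat.lt_or_gt_of_ne hm with h | h
      · simp [Nat.lt_one_iff.mp h]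
      · exact inv_lt_one_of_one_lt₀ (by exact_mod_cast h)
  have term_le (k : ℕ) (hk : 2 ≤ k) (m : ℕ) :
      ‖1 / (m : ℝ) ^ k‖ ≤ 1 / (m : ℝ) ^ 2 := by
    rcases eq_or_ne m 0 with rfl | hm
    · simp [show k ≠ 0 by omega]
    rw [Real.norm_of_nonneg (by positivity)]
    exact one_div_le_one_div_of_le (by positivity)
      (pow_le_pow_right₀ (by exact_mod_cast Nat.one_le_iff_ne_zero.mpr hm) hk)
  simpa using tendsto_tsum_of_dominated_convergence (Real.summable_one_div_nat_pow.mpr one_lt_two)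
    term_limit ((eventually_ge_atTop 2).mono term_le)

theorem stmt10 :
    Filter.Tendsto
      (fun n : ℕ => (-1)^(n+1)
        * (∫ x in (0:ℝ)..1, bernoulliPolyEval (2*n+1) x * Real.cot (Real.pi * x))
        * (2*Real.pi)^(2*n+1) / (2 * Nat.factorial (2*n+1)))
      Filter.atTop (nhds 1) := by
  have odd_tendsto : Tendsto (fun n : ℕ => 2 * n + 1) atTop atTop :=
    tendsto_atTop_mono (fun n => show n ≤ 2 * n + 1 by omega) tendsto_id
  refine (tendsto_tsum_one_div_nat_pow_atTop.comp odd_tendsto).congr' ?_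
  filter_upwards [eventually_ne_atTop 0] with n hn
  rw [Function.comp_apply, (hasSum_integral_bernoulliPolyEval_mul_cot hn).tsum_eq]
  field_simp
end

section
/- For every integer n ≥ 1, the inequality 4/η(2n+2) - 1/η(2n) > 3 holds, where η is the Dirichlet eta function. -/
/-- The Dirichlet eta function of a real argument s, as an alternating series. -/
noncomputable def realEta (s : ℝ) : ℝ := ∑' n : ℕ, (-1)^n / (n+1 : ℝ)^s

/-!
Write `a = η(2n)`, `b = η(2n+2)`; the claim is `a (4 - 3b) - b > 0`. For `n = 1` this follows
from `η(2) = π²/12` and `η(4) = 7π⁴/720`, which come from `ζ(2)`, `ζ(4)` and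
`η(s) = (1 - 2^{1-s}) ζ(s)`. For `n ≥ 2`, truncating the alternating series gives
`a ≥ 1 - x + y - x²` and `b ≤ 1 - x/4 + y/9` with `x = 4⁻ⁿ`, `y = 9⁻ⁿ`. As `a (4 - 3b) - b`
increases in `a` and decreases in `b`, it remains to show that a polynomial in `x, y` is positive;
its dominant part is `5y/9 - 7x²/4`, positive because `x²/y = (9/16)ⁿ ≤ 81/256 < 20/63`.
-/

open Finset Filter Topology Real

lemma realEta_eq_tsum (s : ℝ) : realEta s = ∑' n : ℕ, (-1) ^ n * (((n : ℝ) + 1) ^ s)⁻¹ :=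
  tsum_congr fun _ => div_eq_mul_inv _ _

lemma antitone_inv_rpow_natCast_add_one {s : ℝ} (hs : 0 ≤ s) :
    Antitone fun n : ℕ => (((n : ℝ) + 1) ^ s)⁻¹ := fun i j hij => by
  dsimp only
  gcongr

lemma summable_inv_rpow_natCast_add_one {s : ℝ} (hs : 1 < s) :
    Summable fun n : ℕ => (((n : ℝ) + 1) ^ s)⁻¹ := by
  simpa using (summable_nat_add_iff 1).2 (summable_nat_rpow_inv.2 hs)

lemma tendsto_sum_range_realEta {s : ℝ} (hs : 1 < s) :
    Tendsto (fun k => ∑ i ∈ range k, (-1) ^ i * (((i : ℝ) + 1) ^ s)⁻¹) atTop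
      (𝓝 (realEta s)) := by
  rw [realEta_eq_tsum]
  exact (summable_inv_rpow_natCast_add_one hs).tendsto_alternating_series_tsum

lemma one_sub_add_sub_le_realEta {s : ℝ} (hs : 1 < s) :
    1 - (2 ^ s)⁻¹ + (3 ^ s)⁻¹ - (4 ^ s)⁻¹ ≤ realEta s := by
  have h := (antitone_inv_rpow_natCast_add_one (zero_le_one.trans hs.le)
    ).alternating_series_le_tendsto (tendsto_sum_range_realEta hs) 2
  norm_num [sum_range_succ] at h
  linarith

lemma realEta_le_one_sub_add {s : ℝ} (hs : 1 < s) :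
    realEta s ≤ 1 - (2 ^ s)⁻¹ + (3 ^ s)⁻¹ := by
  have h := (antitone_inv_rpow_natCast_add_one (zero_le_one.trans hs.le)
    ).tendsto_le_alternating_series (tendsto_sum_range_realEta hs) 1
  norm_num [sum_range_succ] at h
  linarith

lemma realEta_pos {s : ℝ} (hs : 1 < s) : 0 < realEta s := by
  have h2 : (2 ^ s)⁻¹ < (1 : ℝ) := inv_lt_one_of_one_lt₀ (one_lt_rpow (by norm_num) (by linarith))
  have h34 : ((4 : ℝ) ^ s)⁻¹ ≤ (3 ^ s)⁻¹ := by gcongr; norm_num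
  linarith [one_sub_add_sub_le_realEta hs]

lemma hasSum_neg_one_pow_mul {R : Type*} [Ring R] [TopologicalSpace R] [IsTopologicalRing R]
    {f : ℕ → R} {a b : R} (hf : HasSum f a)
    (hodd : HasSum (fun k => f (2 * k + 1)) b) :
    HasSum (fun n => (-1) ^ n * f n) (a - 2 * b) := by
  have hind : HasSum (fun n => if Odd n then f n else 0) b := by
    have heven : HasSum (fun k => if Odd (2 * k) then f (2 * k) else 0) 0 :=
      hasSum_zero.congr_fun fun k => by simp
    have hodd' : HasSum (fun k => if Odd (2 * k + 1) then f (2 * k + 1) else 0) b :=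
      hodd.congr_fun fun k => by simp
    simpa using HasSum.even_add_odd (f := fun n => if Odd n then f n else 0) heven hodd'
  refine (hf.sub (hind.mul_left 2)).congr_fun fun n => ?_
  rcases n.even_or_odd with hn | hn
  · simp [hn.neg_one_pow, Nat.not_odd_iff_even.2 hn]
  · simp only [hn.neg_one_pow, hn, if_true]
    noncomm_ring

lemma realEta_eq_of_hasSum {s Z : ℝ} (h : HasSum (fun n : ℕ => (((n : ℝ) + 1) ^ s)⁻¹) Z) :
    realEta s = (1 - 2 * (2 ^ s)⁻¹) * Z := by
  have hodd : HasSum (fun k : ℕ => ((((2 * k + 1 : ℕ) : ℝ) + 1) ^ s)⁻¹) ((2 ^ s)⁻¹ * Z) := by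
    refine (h.mul_left (2 ^ s)⁻¹).congr_fun fun k => ?_
    rw [show ((2 * k + 1 : ℕ) : ℝ) + 1 = 2 * ((k : ℝ) + 1) by push_cast; ring,
      mul_rpow zero_le_two (by positivity), mul_inv]
  rw [realEta_eq_tsum, (hasSum_neg_one_pow_mul h hodd).tsum_eq]
  ring

lemma hasSum_inv_rpow_natCast_add_one {k : ℕ} (hk : k ≠ 0) {Z : ℝ}
    (h : HasSum (fun n : ℕ => 1 / (n : ℝ) ^ k) Z) :
    HasSum (fun n : ℕ => (((n : ℝ) + 1) ^ (k : ℝ))⁻¹) Z := by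
  have := (hasSum_nat_add_iff' 1).2 h
  simpa [zero_pow hk] using this

lemma realEta_two : realEta 2 = π ^ 2 / 12 := by
  have h := realEta_eq_of_hasSum (hasSum_inv_rpow_natCast_add_one two_ne_zero hasSum_zeta_two)
  norm_num at h
  rw [h]
  ring

lemma realEta_four : realEta 4 = 7 * π ^ 4 / 720 := by
  have h := realEta_eq_of_hasSum (hasSum_inv_rpow_natCast_add_one four_ne_zero hasSum_zeta_four)
  norm_num at h
  rw [h]
  ring

lemma three_lt_four_div_realEta_four_sub_one_div_realEta_two :
    3 < 4 / realEta 4 - 1 / realEta 2 := by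
  rw [realEta_four, realEta_two, ← sub_pos]
  have hπ : π < 3.1416 := pi_lt_d4
  have hπ2 : π ^ 2 < 9.8697 := by nlinarith [pi_pos]
  have key : 0 < 2880 - 84 * π ^ 2 - 21 * π ^ 4 := by nlinarith [sq_nonneg π]
  have : 4 / (7 * π ^ 4 / 720) - 1 / (π ^ 2 / 12) - 3 =
      (2880 - 84 * π ^ 2 - 21 * π ^ 4) / (7 * π ^ 4) := by
    field_simp
    ring
  rw [this]
  positivity

lemma three_lt_four_div_sub_one_div {a b x y : ℝ} (hy : 0 < y) (hyx : y ≤ x)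
    (hxy : 256 * x ^ 2 ≤ 81 * y) (ha : 1 - x + y - x ^ 2 ≤ a) (hb₀ : 0 < b)
    (hb : b ≤ 1 - x / 4 + y / 9) : 3 < 4 / b - 1 / a := by
  have hx : x ≤ 81 / 256 := by nlinarith
  have hA : 0 < 1 - x + y - x ^ 2 := by nlinarith
  have hAB : 0 < (1 - x + y - x ^ 2) * (4 - 3 * (1 - x / 4 + y / 9)) - (1 - x / 4 + y / 9) := by
    nlinarith [mul_nonneg hy.le (sub_nonneg.2 hyx), mul_nonneg hy.le (sq_nonneg x),
      mul_nonneg (hy.le.trans hyx) (by nlinarith : 0 ≤ y - x ^ 2)]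
  have hab : 0 < a * (4 - 3 * b) - b := by
    nlinarith [mul_nonneg (sub_nonneg.2 ha) (by nlinarith : 0 ≤ 4 - 3 * b),
      mul_nonneg (sub_nonneg.2 hb) (by positivity : 0 ≤ 3 * (1 - x + y - x ^ 2) + 1)]
  have ha₀ : 0 < a := hA.trans_le ha
  rw [← sub_pos, show 4 / b - 1 / a - 3 = (a * (4 - 3 * b) - b) / (a * b) by field_simp; ring]
  positivity

lemma three_lt_four_div_realEta_sub_one_div_realEta {n : ℕ} (hn : 2 ≤ n) :
    3 < 4 / realEta (2 * n + 2) - 1 / realEta (2 * n) := by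
  have hpow (t : ℝ) (ht : 0 < t) : t ^ (2 * (n : ℝ)) = (t ^ 2) ^ n := by
    rw [rpow_mul ht.le, rpow_two, rpow_natCast]
  have hpow' (t : ℝ) (ht : 0 < t) : t ^ (2 * (n : ℝ) + 2) = t ^ 2 * (t ^ 2) ^ n := by
    rw [rpow_add ht, hpow t ht, rpow_two, mul_comm]
  have hs : 1 < 2 * (n : ℝ) := by
    have : (2 : ℝ) ≤ n := by exact_mod_cast hn
    linarith
  have ha := one_sub_add_sub_le_realEta hs
  have hb := realEta_le_one_sub_add (by linarith : 1 < 2 * (n : ℝ) + 2)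
  rw [hpow 2 two_pos, hpow 3 three_pos, hpow 4 four_pos] at ha
  rw [hpow' 2 two_pos, hpow' 3 three_pos] at hb
  norm_num at ha hb
  have h16 : ((4 : ℝ) ^ n)⁻¹ ^ 2 = (16 ^ n)⁻¹ := by
    rw [inv_pow, ← pow_mul, mul_comm, pow_mul]
    norm_num
  have h9_16 : 256 * (9 : ℝ) ^ n ≤ 81 * 16 ^ n := by
    obtain ⟨m, rfl⟩ := Nat.exists_eq_add_of_le' hn
    have : (9 : ℝ) ^ m ≤ 16 ^ m := by gcongr; norm_num
    rw [pow_add, pow_add]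
    linarith
  refine three_lt_four_div_sub_one_div (x := (4 ^ n)⁻¹) (y := (9 ^ n)⁻¹) (by positivity)
    (by gcongr; norm_num) ?_ ?_ (realEta_pos (by linarith)) ?_
  · rw [h16, ← div_eq_mul_inv, ← div_eq_mul_inv, div_le_div_iff₀ (by positivity) (by positivity)]
    linarith
  · linarith
  · linarith

theorem stmt16 (n : ℕ) (hn : 1 ≤ n) :
    4 / realEta (2*n+2) - 1 / realEta (2*n) > 3 := by
  obtain rfl | hn := hn.eq_or_lt
  · convert three_lt_four_div_realEta_four_sub_one_div_realEta_two using 4 <;> norm_num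
  · exact three_lt_four_div_realEta_sub_one_div_realEta hn
end
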